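/- arXiv:2202.08684 — 7 statements merged into one kernel-verified Lean document; each statement's English description precedes it below -/
import Mathlib

section
/- Let E be a nonzero real 4×4 antisymmetric matrix with Pf(E) = 0. Then the kernel of the linear map ψ_E : ℝ⁴ → ℝ⁴, v ↦ Ě·v, is a 2-dimensional subspace of ℝ⁴. -/
/-- The Pfaffian of a real `4 × 4` antisymmetric matrix `E`:
`Pf(E) = E₀₁E₂₃ − E₀₂E₁₃ + E₀₃E₁₂`. -/
def Pf (E : Matrix (Fin 4) (Fin 4) ℝ) : ℝ :=
  E 0 1 * E 2 3 - E 0 2 * E 1 3 + E 0 3 * E 1 2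

/-- The Hodge dual `Ě` of a real `4 × 4` antisymmetric matrix `E`. -/
def hodge (E : Matrix (Fin 4) (Fin 4) ℝ) : Matrix (Fin 4) (Fin 4) ℝ :=
  !![0, E 2 3, -(E 1 3), E 1 2;
     -(E 2 3), 0, E 0 3, -(E 0 2);
     E 1 3, -(E 0 3), 0, E 0 1;
     -(E 1 2), E 0 2, -(E 0 1), 0]

/-!
If `Pf E = 0` then `Ě E = -Pf(E) • 1 = 0`, so the ranks of `Ě` and `E` add up to at most `4`.
Both matrices are nonzero and skew-symmetric (`Ě` because the Hodge dual is an involution on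
skew matrices), and a nonzero skew matrix has rank at least `2`. Hence `rank Ě = 2`, and its
kernel has dimension `4 - 2 = 2`.
-/

namespace Matrix

variable {K m n : Type*}

theorem apply_eq_neg_of_transpose_eq_neg [Neg K] {M : Matrix n n K} (hM : Mᵀ = -M) (i j : n) :
    M j i = -M i j := by
  simpa using congrFun (congrFun hM i) j

theorem diag_eq_zero_of_transpose_eq_neg [Ring K] [NoZeroDivisors K] [NeZero (2 : K)]
    {M : Matrix n n K} (hM : Mᵀ = -M) (i : n) : M i i = 0 := by
  have h := apply_eq_neg_of_transpose_eq_neg hM i i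
  rw [eq_neg_iff_add_eq_zero, ← two_mul] at h
  exact (mul_eq_zero.mp h).resolve_left two_ne_zero

theorem two_le_rank_of_transpose_eq_neg [Field K] [NeZero (2 : K)] [Fintype n]
    {M : Matrix n n K} (hM : Mᵀ = -M) (hne : M ≠ 0) : 2 ≤ M.rank := by
  obtain ⟨i, j, hij⟩ : ∃ i j, M i j ≠ 0 := by
    by_contra! h
    exact hne (ext h)
  -- rows `i, j` and columns `j, i` form the block `!![a, 0; 0, -a]` with `a = M i j ≠ 0`
  have hdet : (M.submatrix ![i, j] ![j, i]).det ≠ 0 := by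
    rw [det_fin_two]
    simp [diag_eq_zero_of_transpose_eq_neg hM, apply_eq_neg_of_transpose_eq_neg hM i j, hij]
  calc 2 = (M.submatrix ![i, j] ![j, i]).rank := by
        rw [rank_of_isUnit _ ((isUnit_iff_isUnit_det _).mpr hdet.isUnit), Fintype.card_fin]
    _ ≤ M.rank := rank_submatrix_le _ _ _

theorem rank_add_finrank_ker_mulVecLin [Field K] [Fintype n] (A : Matrix m n K) :
    A.rank + Module.finrank K (LinearMap.ker A.mulVecLin) = Fintype.card n := by
  rw [rank, LinearMap.finrank_range_add_finrank_ker, Module.finrank_fintype_fun_eq_card]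

theorem eq_of_transpose_eq_neg_fin_four [Ring K] [NoZeroDivisors K] [NeZero (2 : K)]
    {E : Matrix (Fin 4) (Fin 4) K} (hE : Eᵀ = -E) :
    E = !![0, E 0 1, E 0 2, E 0 3;
           -E 0 1, 0, E 1 2, E 1 3;
           -E 0 2, -E 1 2, 0, E 2 3;
           -E 0 3, -E 1 3, -E 2 3, 0] := by
  ext i j
  fin_cases i <;> fin_cases j <;>
    simp [diag_eq_zero_of_transpose_eq_neg hE] <;> exact apply_eq_neg_of_transpose_eq_neg hE _ _

end Matrix

open Matrix

theorem hodge_zero : hodge 0 = 0 := by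
  ext i j
  fin_cases i <;> fin_cases j <;> simp [hodge]

theorem hodge_transpose (E : Matrix (Fin 4) (Fin 4) ℝ) : (hodge E)ᵀ = -hodge E := by
  ext i j
  fin_cases i <;> fin_cases j <;> simp [hodge]

theorem hodge_hodge {E : Matrix (Fin 4) (Fin 4) ℝ} (hE : Eᵀ = -E) : hodge (hodge E) = E := by
  conv_rhs => rw [eq_of_transpose_eq_neg_fin_four hE]
  ext i j
  fin_cases i <;> fin_cases j <;> simp [hodge]

theorem hodge_mul_self {E : Matrix (Fin 4) (Fin 4) ℝ} (hE : Eᵀ = -E) :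
    hodge E * E = -Pf E • 1 := by
  rw [eq_of_transpose_eq_neg_fin_four hE]
  ext i j
  fin_cases i <;> fin_cases j <;> simp [hodge, mul_apply, Fin.sum_univ_four, Pf] <;> ring

/-- For a nonzero real `4 × 4` antisymmetric matrix `E` with `Pf(E) = 0`,
the kernel of the linear map `ψ_E : ℝ⁴ → ℝ⁴`, `v ↦ Ě ⬝ v`, is a 2-dimensional subspace. -/
theorem finrank_ker_hodge_mulVec_eq_two (E : Matrix (Fin 4) (Fin 4) ℝ)
    (hskew : E.transpose = -E) (hne : E ≠ 0) (hPf : Pf E = 0) :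
    Module.finrank ℝ (LinearMap.ker (Matrix.mulVecLin (hodge E))) = 2 := by
  have hodge_ne_zero : hodge E ≠ 0 := fun h => hne (by rw [← hodge_hodge hskew, h, hodge_zero])
  have two_le_rank := two_le_rank_of_transpose_eq_neg hskew hne
  have two_le_rank_hodge := two_le_rank_of_transpose_eq_neg (hodge_transpose E) hodge_ne_zero
  have rank_add_rank_le :=
    rank_add_rank_le_card_of_mul_eq_zero (by simp [hodge_mul_self hskew, hPf] : hodge E * E = 0)
  have rank_add_finrank_ker := rank_add_finrank_ker_mulVecLin (hodge E)
  simp only [Fintype.card_fin] at rank_add_rank_le rank_add_finrank_ker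
  omega
end

section
/- Let E be a nonzero real 4×4 antisymmetric matrix with Pf(E) = 0, and let (e₁, e₂) be a basis of the 2-dimensional space S_E := ker ψ_E (i.e. e₁, e₂ are linearly independent and Ě·e₁ = Ě·e₂ = 0). Then there exists a unique nonzero scalar λ ∈ ℝ such that E = λ·φ(e₁,e₂). -/
/-- The antisymmetric matrix representing the decomposable bivector `e₁ ∧ e₂ ∈ Λ²ℝ⁴`. -/
def phi (e₁ e₂ : Fin 4 → ℝ) : Matrix (Fin 4) (Fin 4) ℝ :=
  Matrix.of fun a b => e₁ a * e₂ b - e₂ a * e₁ b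

/-- Auxiliary: a proportionality lemma for vectors indexed by `Fin 6`. -/
lemma prop_div (u v : Fin 6 → ℝ) (hprop : ∀ p q : Fin 6, u p * v q = u q * v p)
    (p₀ : Fin 6) (h0 : v p₀ ≠ 0) : ∀ q, u q = (u p₀ / v p₀) * v q := by
  intro q
  rw [div_mul_eq_mul_div, eq_div_iff h0]
  linear_combination hprop q p₀

set_option maxHeartbeats 1000000 in
/-- Let `E ≠ 0` be a real `4 × 4` antisymmetric matrix with `Pf(E) = 0`, and
let `(e₁, e₂)` be a basis of `S_E = ker ψ_E` (i.e. `e₁, e₂` are linearly independent and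
`Ě ⬝ e₁ = Ě ⬝ e₂ = 0`). Then there is a unique nonzero scalar `λ` with `E = λ • φ(e₁,e₂)`. -/
theorem exists_unique_scalar_decomposition (E : Matrix (Fin 4) (Fin 4) ℝ)
    (hskew : E.transpose = -E) (hne : E ≠ 0) (hPf : Pf E = 0)
    (e₁ e₂ : Fin 4 → ℝ) (hind : LinearIndependent ℝ ![e₁, e₂])
    (h₁ : (hodge E).mulVec e₁ = 0) (h₂ : (hodge E).mulVec e₂ = 0) :
    ∃! lam : ℝ, lam ≠ 0 ∧ E = lam • phi e₁ e₂ := by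
  -- antisymmetry facts
  have hsk : ∀ i j : Fin 4, E j i = -E i j := by
    intro i j
    have h := congrFun (congrFun hskew i) j
    simpa [Matrix.transpose_apply, Matrix.neg_apply] using h
  -- the eight linear constraint equations
  have L10 : E 2 3 * e₁ 1 - E 1 3 * e₁ 2 + E 1 2 * e₁ 3 = 0 := by
    have h := congrFun h₁ 0
    simp [hodge, Matrix.mulVec, dotProduct, Fin.sum_univ_four] at h
    linarith [h]
  have L11 : -(E 2 3) * e₁ 0 + E 0 3 * e₁ 2 - E 0 2 * e₁ 3 = 0 := by
    have h := congrFun h₁ 1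
    simp [hodge, Matrix.mulVec, dotProduct, Fin.sum_univ_four] at h
    linarith [h]
  have L12 : E 1 3 * e₁ 0 - E 0 3 * e₁ 1 + E 0 1 * e₁ 3 = 0 := by
    have h := congrFun h₁ 2
    simp [hodge, Matrix.mulVec, dotProduct, Fin.sum_univ_four] at h
    linarith [h]
  have L13 : -(E 1 2) * e₁ 0 + E 0 2 * e₁ 1 - E 0 1 * e₁ 2 = 0 := by
    have h := congrFun h₁ 3
    simp [hodge, Matrix.mulVec, dotProduct, Fin.sum_univ_four] at h
    linarith [h]
  have L20 : E 2 3 * e₂ 1 - E 1 3 * e₂ 2 + E 1 2 * e₂ 3 = 0 := by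
    have h := congrFun h₂ 0
    simp [hodge, Matrix.mulVec, dotProduct, Fin.sum_univ_four] at h
    linarith [h]
  have L21 : -(E 2 3) * e₂ 0 + E 0 3 * e₂ 2 - E 0 2 * e₂ 3 = 0 := by
    have h := congrFun h₂ 1
    simp [hodge, Matrix.mulVec, dotProduct, Fin.sum_univ_four] at h
    linarith [h]
  have L22 : E 1 3 * e₂ 0 - E 0 3 * e₂ 1 + E 0 1 * e₂ 3 = 0 := by
    have h := congrFun h₂ 2
    simp [hodge, Matrix.mulVec, dotProduct, Fin.sum_univ_four] at h
    linarith [h]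
  have L23 : -(E 1 2) * e₂ 0 + E 0 2 * e₂ 1 - E 0 1 * e₂ 2 = 0 := by
    have h := congrFun h₂ 3
    simp [hodge, Matrix.mulVec, dotProduct, Fin.sum_univ_four] at h
    linarith [h]
  -- the fifteen proportionality identities
  have g1 : E 0 1 * (e₁ 0 * e₂ 2 - e₂ 0 * e₁ 2) = E 0 2 * (e₁ 0 * e₂ 1 - e₂ 0 * e₁ 1) := by
    linear_combination (-(e₁ 0)) * L23 + (e₂ 0) * L13
  have g2 : E 0 1 * (e₁ 0 * e₂ 3 - e₂ 0 * e₁ 3) = E 0 3 * (e₁ 0 * e₂ 1 - e₂ 0 * e₁ 1) := by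
    linear_combination (e₁ 0) * L22 - (e₂ 0) * L12
  have g3 : E 0 1 * (e₁ 1 * e₂ 2 - e₂ 1 * e₁ 2) = E 1 2 * (e₁ 0 * e₂ 1 - e₂ 0 * e₁ 1) := by
    linear_combination (-(e₁ 1)) * L23 + (e₂ 1) * L13
  have g4 : E 0 1 * (e₁ 1 * e₂ 3 - e₂ 1 * e₁ 3) = E 1 3 * (e₁ 0 * e₂ 1 - e₂ 0 * e₁ 1) := by
    linear_combination (e₁ 1) * L22 - (e₂ 1) * L12
  have g5 : E 0 1 * (e₁ 2 * e₂ 3 - e₂ 2 * e₁ 3) = E 2 3 * (e₁ 0 * e₂ 1 - e₂ 0 * e₁ 1) := by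
    linear_combination (e₂ 0) * L10 + (e₂ 1) * L11 + (e₁ 2) * L22 + (e₁ 3) * L23
  have g6 : E 0 2 * (e₁ 0 * e₂ 3 - e₂ 0 * e₁ 3) = E 0 3 * (e₁ 0 * e₂ 2 - e₂ 0 * e₁ 2) := by
    linear_combination (-(e₁ 0)) * L21 + (e₂ 0) * L11
  have g7 : E 0 2 * (e₁ 1 * e₂ 2 - e₂ 1 * e₁ 2) = E 1 2 * (e₁ 0 * e₂ 2 - e₂ 0 * e₁ 2) := by
    linear_combination (-(e₁ 2)) * L23 + (e₂ 2) * L13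
  have g8 : E 0 2 * (e₁ 1 * e₂ 3 - e₂ 1 * e₁ 3) = E 1 3 * (e₁ 0 * e₂ 2 - e₂ 0 * e₁ 2) := by
    linear_combination (-(e₂ 0)) * L10 - (e₁ 1) * L21 - (e₂ 2) * L12 - (e₁ 3) * L23
  have g9 : E 0 2 * (e₁ 2 * e₂ 3 - e₂ 2 * e₁ 3) = E 2 3 * (e₁ 0 * e₂ 2 - e₂ 0 * e₁ 2) := by
    linear_combination (-(e₁ 2)) * L21 + (e₂ 2) * L11
  have g10 : E 0 3 * (e₁ 1 * e₂ 2 - e₂ 1 * e₁ 2) = E 1 2 * (e₁ 0 * e₂ 3 - e₂ 0 * e₁ 3) := by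
    linear_combination (-(e₁ 0)) * L20 - (e₂ 1) * L11 - (e₂ 2) * L12 - (e₁ 3) * L23
  have g11 : E 0 3 * (e₁ 1 * e₂ 3 - e₂ 1 * e₁ 3) = E 1 3 * (e₁ 0 * e₂ 3 - e₂ 0 * e₁ 3) := by
    linear_combination (e₁ 3) * L22 - (e₂ 3) * L12
  have g12 : E 0 3 * (e₁ 2 * e₂ 3 - e₂ 2 * e₁ 3) = E 2 3 * (e₁ 0 * e₂ 3 - e₂ 0 * e₁ 3) := by
    linear_combination (-(e₁ 3)) * L21 + (e₂ 3) * L11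
  have g13 : E 1 2 * (e₁ 1 * e₂ 3 - e₂ 1 * e₁ 3) = E 1 3 * (e₁ 1 * e₂ 2 - e₂ 1 * e₁ 2) := by
    linear_combination (e₁ 1) * L20 - (e₂ 1) * L10
  have g14 : E 1 2 * (e₁ 2 * e₂ 3 - e₂ 2 * e₁ 3) = E 2 3 * (e₁ 1 * e₂ 2 - e₂ 1 * e₁ 2) := by
    linear_combination (e₁ 2) * L20 - (e₂ 2) * L10
  have g15 : E 1 3 * (e₁ 2 * e₂ 3 - e₂ 2 * e₁ 3) = E 2 3 * (e₁ 1 * e₂ 3 - e₂ 1 * e₁ 3) := by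
    linear_combination (e₁ 3) * L20 - (e₂ 3) * L10
  -- package into Fin 6 vectors
  have hprop : ∀ p q : Fin 6,
      (![E 0 1, E 0 2, E 0 3, E 1 2, E 1 3, E 2 3] : Fin 6 → ℝ) p *
        (![e₁ 0 * e₂ 1 - e₂ 0 * e₁ 1, e₁ 0 * e₂ 2 - e₂ 0 * e₁ 2, e₁ 0 * e₂ 3 - e₂ 0 * e₁ 3,
           e₁ 1 * e₂ 2 - e₂ 1 * e₁ 2, e₁ 1 * e₂ 3 - e₂ 1 * e₁ 3,
           e₁ 2 * e₂ 3 - e₂ 2 * e₁ 3] : Fin 6 → ℝ) q =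
      (![E 0 1, E 0 2, E 0 3, E 1 2, E 1 3, E 2 3] : Fin 6 → ℝ) q *
        (![e₁ 0 * e₂ 1 - e₂ 0 * e₁ 1, e₁ 0 * e₂ 2 - e₂ 0 * e₁ 2, e₁ 0 * e₂ 3 - e₂ 0 * e₁ 3,
           e₁ 1 * e₂ 2 - e₂ 1 * e₁ 2, e₁ 1 * e₂ 3 - e₂ 1 * e₁ 3,
           e₁ 2 * e₂ 3 - e₂ 2 * e₁ 3] : Fin 6 → ℝ) p := by
    intro p q
    fin_cases p <;> fin_cases q <;>
      simp [show (![E 0 1, E 0 2, E 0 3, E 1 2, E 1 3, E 2 3] : Fin 6 → ℝ) 5 = E 2 3 from rfl,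
        show (![e₁ 0 * e₂ 1 - e₂ 0 * e₁ 1, e₁ 0 * e₂ 2 - e₂ 0 * e₁ 2, e₁ 0 * e₂ 3 - e₂ 0 * e₁ 3,
           e₁ 1 * e₂ 2 - e₂ 1 * e₁ 2, e₁ 1 * e₂ 3 - e₂ 1 * e₁ 3,
           e₁ 2 * e₂ 3 - e₂ 2 * e₁ 3] : Fin 6 → ℝ) 5 = e₁ 2 * e₂ 3 - e₂ 2 * e₁ 3 from rfl] <;>
      linarith [g1, g2, g3, g4, g5, g6, g7, g8, g9, g10, g11, g12, g13, g14, g15]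
  -- some component of v is nonzero, by linear independence
  have hex : ∃ p : Fin 6,
      (![e₁ 0 * e₂ 1 - e₂ 0 * e₁ 1, e₁ 0 * e₂ 2 - e₂ 0 * e₁ 2, e₁ 0 * e₂ 3 - e₂ 0 * e₁ 3,
         e₁ 1 * e₂ 2 - e₂ 1 * e₁ 2, e₁ 1 * e₂ 3 - e₂ 1 * e₁ 3,
         e₁ 2 * e₂ 3 - e₂ 2 * e₁ 3] : Fin 6 → ℝ) p ≠ 0 := by
    by_contra hc
    push_neg at hc
    have z0 : e₁ 0 * e₂ 1 - e₂ 0 * e₁ 1 = 0 := hc 0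
    have z1 : e₁ 0 * e₂ 2 - e₂ 0 * e₁ 2 = 0 := hc 1
    have z2 : e₁ 0 * e₂ 3 - e₂ 0 * e₁ 3 = 0 := hc 2
    have z3 : e₁ 1 * e₂ 2 - e₂ 1 * e₁ 2 = 0 := hc 3
    have z4 : e₁ 1 * e₂ 3 - e₂ 1 * e₁ 3 = 0 := hc 4
    have z5 : e₁ 2 * e₂ 3 - e₂ 2 * e₁ 3 = 0 := hc 5
    have hm0 : ∀ a b : Fin 4, e₁ a * e₂ b - e₂ a * e₁ b = 0 := by
      intro a b
      fin_cases a <;> fin_cases b <;> simp <;> linarith [z0, z1, z2, z3, z4, z5]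
    rw [LinearIndependent.pair_iff] at hind
    have he1 : e₁ ≠ 0 := by
      intro h0
      have := (hind 1 0 (by simp [h0])).1
      norm_num at this
    obtain ⟨a, ha⟩ := Function.ne_iff.mp he1
    have ha' : e₁ a ≠ 0 := by simpa using ha
    have hd := hind (e₂ a) (-(e₁ a)) (by
      funext b
      have hb := hm0 a b
      simp only [Pi.add_apply, Pi.smul_apply, Pi.zero_apply, smul_eq_mul, neg_mul]
      linarith)
    exact ha' (by linarith [hd.2])
  obtain ⟨p₀, hp₀⟩ := hex
  have hcoord := prop_div _ _ hprop p₀ hp₀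
  set lam : ℝ := (![E 0 1, E 0 2, E 0 3, E 1 2, E 1 3, E 2 3] : Fin 6 → ℝ) p₀ /
      (![e₁ 0 * e₂ 1 - e₂ 0 * e₁ 1, e₁ 0 * e₂ 2 - e₂ 0 * e₁ 2, e₁ 0 * e₂ 3 - e₂ 0 * e₁ 3,
         e₁ 1 * e₂ 2 - e₂ 1 * e₁ 2, e₁ 1 * e₂ 3 - e₂ 1 * e₁ 3,
         e₁ 2 * e₂ 3 - e₂ 2 * e₁ 3] : Fin 6 → ℝ) p₀ with hlam
  have c0 : E 0 1 = lam * (e₁ 0 * e₂ 1 - e₂ 0 * e₁ 1) := hcoord 0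
  have c1 : E 0 2 = lam * (e₁ 0 * e₂ 2 - e₂ 0 * e₁ 2) := hcoord 1
  have c2 : E 0 3 = lam * (e₁ 0 * e₂ 3 - e₂ 0 * e₁ 3) := hcoord 2
  have c3 : E 1 2 = lam * (e₁ 1 * e₂ 2 - e₂ 1 * e₁ 2) := hcoord 3
  have c4 : E 1 3 = lam * (e₁ 1 * e₂ 3 - e₂ 1 * e₁ 3) := hcoord 4
  have c5 : E 2 3 = lam * (e₁ 2 * e₂ 3 - e₂ 2 * e₁ 3) := hcoord 5
  -- lower-triangular/diagonal entries of E
  have hE00 : E 0 0 = 0 := by have := hsk 0 0; linarith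
  have hE11 : E 1 1 = 0 := by have := hsk 1 1; linarith
  have hE22 : E 2 2 = 0 := by have := hsk 2 2; linarith
  have hE33 : E 3 3 = 0 := by have := hsk 3 3; linarith
  have hE10 : E 1 0 = -E 0 1 := hsk 0 1
  have hE20 : E 2 0 = -E 0 2 := hsk 0 2
  have hE30 : E 3 0 = -E 0 3 := hsk 0 3
  have hE21 : E 2 1 = -E 1 2 := hsk 1 2
  have hE31 : E 3 1 = -E 1 3 := hsk 1 3
  have hE32 : E 3 2 = -E 2 3 := hsk 2 3
  have heq : E = lam • phi e₁ e₂ := by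
    ext i j
    fin_cases i <;> fin_cases j <;>
      simp [phi, Matrix.smul_apply, smul_eq_mul, hE00, hE11, hE22, hE33,
        hE10, hE20, hE30, hE21, hE31, hE32] <;>
      first
        | (right; ring)
        | linarith [c0, c1, c2, c3, c4, c5]
  have hlamne : lam ≠ 0 := by
    intro h0
    apply hne
    rw [heq, h0, zero_smul]
  refine ⟨lam, ⟨hlamne, heq⟩, ?_⟩
  rintro μ ⟨hμne, hμ⟩
  have hμe : ∀ i j : Fin 4, E i j = μ * (e₁ i * e₂ j - e₂ i * e₁ j) := by
    intro i j
    rw [hμ]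
    simp [phi, Matrix.smul_apply]
  have h1' : (![E 0 1, E 0 2, E 0 3, E 1 2, E 1 3, E 2 3] : Fin 6 → ℝ) p₀ =
      μ * (![e₁ 0 * e₂ 1 - e₂ 0 * e₁ 1, e₁ 0 * e₂ 2 - e₂ 0 * e₁ 2, e₁ 0 * e₂ 3 - e₂ 0 * e₁ 3,
         e₁ 1 * e₂ 2 - e₂ 1 * e₁ 2, e₁ 1 * e₂ 3 - e₂ 1 * e₁ 3,
         e₁ 2 * e₂ 3 - e₂ 2 * e₁ 3] : Fin 6 → ℝ) p₀ := by
    fin_cases p₀ <;>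
      first
        | exact hμe 0 1
        | exact hμe 0 2
        | exact hμe 0 3
        | exact hμe 1 2
        | exact hμe 1 3
        | exact hμe 2 3
  have h2' := hcoord p₀
  have hfin : μ * (![e₁ 0 * e₂ 1 - e₂ 0 * e₁ 1, e₁ 0 * e₂ 2 - e₂ 0 * e₁ 2,
      e₁ 0 * e₂ 3 - e₂ 0 * e₁ 3, e₁ 1 * e₂ 2 - e₂ 1 * e₁ 2, e₁ 1 * e₂ 3 - e₂ 1 * e₁ 3,
      e₁ 2 * e₂ 3 - e₂ 2 * e₁ 3] : Fin 6 → ℝ) p₀ = lam *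
      (![e₁ 0 * e₂ 1 - e₂ 0 * e₁ 1, e₁ 0 * e₂ 2 - e₂ 0 * e₁ 2, e₁ 0 * e₂ 3 - e₂ 0 * e₁ 3,
         e₁ 1 * e₂ 2 - e₂ 1 * e₁ 2, e₁ 1 * e₂ 3 - e₂ 1 * e₁ 3,
         e₁ 2 * e₂ 3 - e₂ 2 * e₁ 3] : Fin 6 → ℝ) p₀ := by rw [← h1']; exact h2'
  exact mul_right_cancel₀ hp₀ hfin
end

section
/- A real 4×4 antisymmetric matrix E satisfies E ≠ 0 and Pf(E) = 0 if and only if there exist linearly independent vectors e₁, e₂ ∈ ℝ⁴ such that E = φ(e₁,e₂). (In the paper's notation: φ(W) = B, where W is the set of linearly independent pairs and B the set of nonzero antisymmetric matrices with vanishing Pfaffian.) -/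
set_option maxHeartbeats 3000000 in
/-- The Plücker-type identity for a skew matrix with vanishing Pfaffian. -/
lemma plucker_aux (E : Matrix (Fin 4) (Fin 4) ℝ) (hE : ∀ a b, E b a = -E a b)
    (hPf : E 0 1 * E 2 3 - E 0 2 * E 1 3 + E 0 3 * E 1 2 = 0) (a b c d : Fin 4) :
    E a b * E c d = E a c * E b d - E b c * E a d := by
  have h00 : E 0 0 = 0 := by linarith [hE 0 0]
  have h11 : E 1 1 = 0 := by linarith [hE 1 1]
  have h22 : E 2 2 = 0 := by linarith [hE 2 2]
  have h33 : E 3 3 = 0 := by linarith [hE 3 3]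
  have h10 := hE 0 1; have h20 := hE 0 2; have h21 := hE 1 2
  have h30 := hE 0 3; have h31 := hE 1 3; have h32 := hE 2 3
  have ha : a = 0 ∨ a = 1 ∨ a = 2 ∨ a = 3 := by omega
  have hb : b = 0 ∨ b = 1 ∨ b = 2 ∨ b = 3 := by omega
  have hc : c = 0 ∨ c = 1 ∨ c = 2 ∨ c = 3 := by omega
  have hd : d = 0 ∨ d = 1 ∨ d = 2 ∨ d = 3 := by omega
  rcases ha with rfl|rfl|rfl|rfl <;> rcases hb with rfl|rfl|rfl|rfl <;>
    rcases hc with rfl|rfl|rfl|rfl <;> rcases hd with rfl|rfl|rfl|rfl <;>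
    (try simp only [h00, h11, h22, h33, h10, h20, h21, h30, h31, h32]) <;>
    first | linear_combination | linear_combination hPf | linear_combination -hPf

/-- A real `4 × 4` antisymmetric matrix `E` satisfies `E ≠ 0` and `Pf(E) = 0`
iff there exist linearly independent vectors `e₁, e₂ ∈ ℝ⁴` with `E = φ(e₁,e₂)`; i.e.
`φ(W) = B`. -/
theorem ne_zero_and_pfaffian_eq_zero_iff_decomposable (E : Matrix (Fin 4) (Fin 4) ℝ)
    (hskew : E.transpose = -E) :
    (E ≠ 0 ∧ Pf E = 0) ↔
      ∃ e₁ e₂ : Fin 4 → ℝ, LinearIndependent ℝ ![e₁, e₂] ∧ E = phi e₁ e₂ := by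
  have hE : ∀ a b, E b a = -E a b := by
    intro a b
    have := congrFun (congrFun hskew a) b
    simpa [Matrix.transpose_apply] using this
  constructor
  · rintro ⟨hne, hPf⟩
    -- find a nonzero entry
    have hex : ∃ a b, E a b ≠ 0 := by
      by_contra h
      push_neg at h
      exact hne (by ext a b; simpa using h a b)
    obtain ⟨a, b, hab⟩ := hex
    have hba : E b a = -E a b := hE a b
    have haa : E a a = 0 := by linarith [hE a a]
    have hbb : E b b = 0 := by linarith [hE b b]
    refine ⟨fun c => (E a b)⁻¹ * E a c, fun c => E b c, ?_, ?_⟩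
    · rw [LinearIndependent.pair_iff]
      intro s t hst
      have hA := congrFun hst a
      have hB := congrFun hst b
      simp only [Pi.add_apply, Pi.smul_apply, smul_eq_mul, Pi.zero_apply] at hA hB
      rw [haa] at hA
      rw [hbb] at hB
      have hs : s = 0 := by
        field_simp [hab] at hB
        simpa using hB
      have ht : t = 0 := by
        rw [hba] at hA
        have : t * (-E a b) = 0 := by simpa [hs] using hA
        rcases mul_eq_zero.mp this with h | h
        · exact h
        · exact absurd (by linarith : E a b = 0) hab
      exact ⟨hs, ht⟩
    · unfold Pf at hPf
      ext c d
      simp only [phi, Matrix.of_apply]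
      have key := plucker_aux E hE hPf a b c d
      field_simp
      linear_combination key
  · rintro ⟨e₁, e₂, hli, rfl⟩
    constructor
    · intro h0
      have h1 : e₁ ≠ 0 := hli.ne_zero 0
      obtain ⟨a, ha⟩ : ∃ a, e₁ a ≠ 0 := by
        by_contra h; push_neg at h; exact h1 (funext h)
      have hcomp : ∀ b c, e₁ b * e₂ c - e₂ b * e₁ c = 0 := by
        intro b c
        have := congrFun (congrFun h0 b) c
        simpa [phi] using this
      have := (LinearIndependent.pair_iff.mp hli) (e₂ a) (-(e₁ a)) ?_
      · exact absurd (neg_eq_zero.mp this.2) ha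
      · funext b
        simp only [Pi.add_apply, Pi.smul_apply, smul_eq_mul, Pi.zero_apply]
        linear_combination -hcomp a b
    · simp only [Pf, phi, Matrix.of_apply]
      ring
end

section
/- Let e₁, e₂ ∈ ℝ⁴ be linearly independent and let e₁', e₂' ∈ ℝ⁴. Then φ(e₁,e₂) = φ(e₁',e₂') if and only if there exist real numbers a, b, c, d with ad − bc = 1 such that e₁' = a·e₁ + b·e₂ and e₂' = c·e₁ + d·e₂. (This describes the fibers of the quotient map underlying the diffeomorphism φ̄ : W/K → B.) -/
/-- For linearly independent `e₁, e₂ ∈ ℝ⁴` and arbitrary `e₁', e₂' ∈ ℝ⁴`,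
`φ(e₁,e₂) = φ(e₁',e₂')` iff `(e₁',e₂')` is obtained from `(e₁,e₂)` by a unimodular linear
transformation: there are `a, b, c, d ∈ ℝ` with `ad − bc = 1`, `e₁' = a•e₁ + b•e₂` and
`e₂' = c•e₁ + d•e₂`. -/
theorem phi_eq_phi_iff_unimodular (e₁ e₂ e₁' e₂' : Fin 4 → ℝ)
    (hind : LinearIndependent ℝ ![e₁, e₂]) :
    phi e₁ e₂ = phi e₁' e₂' ↔
      ∃ a b c d : ℝ, a * d - b * c = 1 ∧
        e₁' = a • e₁ + b • e₂ ∧ e₂' = c • e₁ + d • e₂ := by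
  constructor
  · intro h
    have H : ∀ a b, e₁ a * e₂ b - e₂ a * e₁ b = e₁' a * e₂' b - e₂' a * e₁' b := by
      intro a b
      have := congrFun (congrFun h a) b
      simpa [phi] using this
    have hpair := LinearIndependent.pair_iff.mp hind
    have hminor : ∃ i j, e₁ i * e₂ j - e₂ i * e₁ j ≠ 0 := by
      by_contra hc
      push_neg at hc
      have hrel : ∀ i j, e₁ i * e₂ j = e₂ i * e₁ j := by
        intro i j; have := hc i j; linarith [sub_eq_zero.mp (hc i j)]
      have he₁ : e₁ ≠ 0 := by
        intro h0
        have := (hpair 1 0 (by simp [h0])).1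
        norm_num at this
      obtain ⟨i, hi⟩ : ∃ i, e₁ i ≠ 0 := by
        by_contra hc2; push_neg at hc2; exact he₁ (funext hc2)
      have hz : (e₂ i / e₁ i) • e₁ + (-1 : ℝ) • e₂ = 0 := by
        funext k
        have hr := hrel i k
        simp only [Pi.add_apply, Pi.smul_apply, Pi.zero_apply, smul_eq_mul]
        field_simp
        linarith [hrel i k]
      have := (hpair _ _ hz).2
      norm_num at this
    obtain ⟨i, j, hΔ⟩ := hminor
    set Δ := e₁ i * e₂ j - e₂ i * e₁ j with hΔdef
    have hΔ' : e₁' i * e₂' j - e₂' i * e₁' j = Δ := (H i j).symm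
    set a := (e₁' i * e₂ j - e₁' j * e₂ i) / Δ with ha
    set b := (e₁' j * e₁ i - e₁' i * e₁ j) / Δ with hb
    set c := (e₂' i * e₂ j - e₂' j * e₂ i) / Δ with hc
    set d := (e₂' j * e₁ i - e₂' i * e₁ j) / Δ with hd
    have h1 : e₁' = a • e₁ + b • e₂ := by
      funext k
      simp only [Pi.add_apply, Pi.smul_apply, smul_eq_mul, ha, hb]
      field_simp
      linear_combination e₁' k * (H i j) - e₁' i * (H k j) + e₁' j * (H k i)
    have h2 : e₂' = c • e₁ + d • e₂ := by
      funext k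
      simp only [Pi.add_apply, Pi.smul_apply, smul_eq_mul, hc, hd]
      field_simp
      linear_combination e₂' k * (H i j) - e₂' i * (H k j) + e₂' j * (H k i)
    have hdet : (a * d - b * c) * Δ = Δ := by
      have h1i := congrFun h1 i
      have h1j := congrFun h1 j
      have h2i := congrFun h2 i
      have h2j := congrFun h2 j
      simp only [Pi.add_apply, Pi.smul_apply, smul_eq_mul] at h1i h1j h2i h2j
      calc (a * d - b * c) * Δ
          = (a * e₁ i + b * e₂ i) * (c * e₁ j + d * e₂ j)
            - (c * e₁ i + d * e₂ i) * (a * e₁ j + b * e₂ j) := by ring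
        _ = e₁' i * e₂' j - e₂' i * e₁' j := by rw [← h1i, ← h1j, ← h2i, ← h2j]
        _ = Δ := hΔ'
    have : a * d - b * c = 1 := by
      refine mul_right_cancel₀ hΔ ?_
      rw [one_mul]; exact hdet
    exact ⟨a, b, c, d, this, h1, h2⟩
  · rintro ⟨a, b, c, d, habcd, rfl, rfl⟩
    ext k l
    simp only [phi, Matrix.of_apply, Pi.add_apply, Pi.smul_apply, smul_eq_mul]
    linear_combination (e₂ k * e₁ l - e₁ k * e₂ l) * habcd
end

section
/- Let V be a real vector space of finite dimension 4 and let ε_m, ε_n ∈ V be fixed linearly independent vectors. For a bivector E ∈ ⋀²V, the following are equivalent: (i) E∧E = 0 in ⋀⁴V and E∧ε_m∧ε_n ≠ 0 in ⋀⁴V; (ii) there exist e₁, e₂ ∈ V such that the family (e₁, e₂, ε_m, ε_n) is linearly independent (hence a basis of V) and E = e₁∧e₂. (In the paper's notation: φ(W') = B'.) -/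
/-!
Extend `(εm, εn)` to a basis `(b₀, b₁, b₂ = εm, b₃ = εn)` and write `E = ∑_{i<j} A i j • bᵢ ∧ bⱼ`.
With `Ω = b₀ ∧ b₁ ∧ b₂ ∧ b₃ ≠ 0` one has `E ∧ εm ∧ εn = A₀₁ Ω` and `E ∧ E = 2 Pf(A) Ω`, so (i) says
`A₀₁ ≠ 0` and `Pf(A) = 0`, and then
`A₀₁ E = (A₀₁ b₀ - A₁₂ b₂ - A₁₃ b₃) ∧ (A₀₁ b₁ + A₀₂ b₂ + A₀₃ b₃)`.
In both directions, the linear independence of `(e₁, e₂, εm, εn)` is the non-vanishing of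
`e₁ ∧ e₂ ∧ εm ∧ εn`.
-/

open ExteriorAlgebra Module

theorem exists_basis_fin_four_extending_pair {K V : Type*} [Field K] [AddCommGroup V]
    [Module K V] [FiniteDimensional K V] (hV : finrank K V = 4) {u w : V}
    (huw : LinearIndependent K ![u, w]) : ∃ b : Basis (Fin 4) K V, b 2 = u ∧ b 3 = w := by
  obtain ⟨x, hx⟩ := exists_linearIndependent_cons_of_lt_finrank huw (by omega)
  obtain ⟨y, hy⟩ := exists_linearIndependent_cons_of_lt_finrank hx (by omega)
  exact ⟨basisOfLinearIndependentOfCardEqFinrank hy (by simp [hV]), by simp, by simp⟩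

def Matrix.pfaffianFour {R : Type*} [CommRing R] (A : Matrix (Fin 4) (Fin 4) R) : R :=
  A 0 1 * A 2 3 - A 0 2 * A 1 3 + A 0 3 * A 1 2

namespace ExteriorAlgebra

section CommRing

variable {R M : Type*} [CommRing R] [AddCommGroup M] [Module R M]

theorem ι_mul_ι_comm (x y : M) : ι R x * ι R y = -(ι R y * ι R x) :=
  eq_neg_of_add_eq_zero_left (ι_add_mul_swap x y)

theorem ι_mul_ι_mul_comm (x y : M) (a : ExteriorAlgebra R M) :
    ι R x * (ι R y * a) = -(ι R y * (ι R x * a)) := by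
  rw [← mul_assoc, ← mul_assoc, ι_mul_ι_comm, neg_mul]

theorem ι_mul_ι_mul_eq_zero (x : M) (a : ExteriorAlgebra R M) : ι R x * (ι R x * a) = 0 := by
  rw [← mul_assoc, ι_sq_zero, zero_mul]

theorem ι_mul_ι_mul_ι_mul_ι_self (x y : M) : ι R x * ι R y * (ι R x * ι R y) = 0 := by
  rw [mul_assoc, ι_mul_ι_mul_comm y x, mul_neg, ι_mul_ι_mul_eq_zero, neg_zero]

theorem ιMulti_fin_four (a b c d : M) :
    ιMulti R 4 ![a, b, c, d] = ι R a * ι R b * ι R c * ι R d := by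
  simp [mul_assoc, Matrix.vecTail]

@[simps]
def bivectorOfMatrix (b : Fin 4 → M) : Matrix (Fin 4) (Fin 4) R →ₗ[R] ExteriorAlgebra R M where
  toFun A := A 0 1 • (ι R (b 0) * ι R (b 1)) + A 0 2 • (ι R (b 0) * ι R (b 2)) +
    A 0 3 • (ι R (b 0) * ι R (b 3)) + A 1 2 • (ι R (b 1) * ι R (b 2)) +
    A 1 3 • (ι R (b 1) * ι R (b 3)) + A 2 3 • (ι R (b 2) * ι R (b 3))
  map_add' A B := by simp only [Matrix.add_apply, add_smul]; abel
  map_smul' r A := by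
    simp only [Matrix.smul_apply, smul_eq_mul, mul_smul, RingHom.id_apply, smul_add]

theorem ι_mul_ι_eq_bivectorOfMatrix (b : Basis (Fin 4) R M) (x y : M) :
    ι R x * ι R y = bivectorOfMatrix b
      (Matrix.of fun i j => b.repr x i * b.repr y j - b.repr x j * b.repr y i) := by
  conv_lhs => rw [← b.sum_repr x, ← b.sum_repr y]
  simp only [bivectorOfMatrix_apply, Matrix.of_apply, Fin.sum_univ_four, map_add, map_smul,
    add_mul, mul_add, smul_mul_assoc, mul_smul_comm, ι_sq_zero,
    ι_mul_ι_comm (b 1) (b 0), ι_mul_ι_comm (b 2) (b 0), ι_mul_ι_comm (b 3) (b 0),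
    ι_mul_ι_comm (b 2) (b 1), ι_mul_ι_comm (b 3) (b 1), ι_mul_ι_comm (b 3) (b 2),
    smul_zero, smul_neg, add_zero, zero_add]
  match_scalars <;> ring

theorem exists_bivectorOfMatrix_eq (b : Basis (Fin 4) R M) {E : ExteriorAlgebra R M}
    (hE : E ∈ ⋀[R]^2 M) : ∃ A, bivectorOfMatrix b A = E := by
  rw [← ιMulti_span_fixedDegree] at hE
  refine LinearMap.mem_range.1 (Submodule.span_le.2 ?_ hE)
  rintro _ ⟨v, rfl⟩
  exact ⟨_, (ι_mul_ι_eq_bivectorOfMatrix b (v 0) (v 1)).symm.trans (by simp [Matrix.vecTail])⟩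

theorem bivectorOfMatrix_mul_ι_mul_ι (b : Fin 4 → M) (A : Matrix (Fin 4) (Fin 4) R) :
    bivectorOfMatrix b A * ι R (b 2) * ι R (b 3) =
      A 0 1 • (ι R (b 0) * ι R (b 1) * ι R (b 2) * ι R (b 3)) := by
  simp only [bivectorOfMatrix_apply, add_mul, smul_mul_assoc, mul_assoc,
    ι_mul_ι_mul_comm (b 3) (b 2), ι_sq_zero, mul_zero, neg_zero, smul_zero, add_zero]

theorem bivectorOfMatrix_mul_self (b : Fin 4 → M) (A : Matrix (Fin 4) (Fin 4) R) :
    bivectorOfMatrix b A * bivectorOfMatrix b A =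
      (2 * A.pfaffianFour) • (ι R (b 0) * ι R (b 1) * ι R (b 2) * ι R (b 3)) := by
  simp only [bivectorOfMatrix_apply, add_mul, mul_add, smul_mul_assoc, mul_smul_comm, mul_assoc,
    ι_mul_ι_mul_eq_zero, ι_sq_zero,
    ι_mul_ι_mul_comm (b 1) (b 0), ι_mul_ι_mul_comm (b 2) (b 0), ι_mul_ι_mul_comm (b 3) (b 0),
    ι_mul_ι_mul_comm (b 2) (b 1), ι_mul_ι_mul_comm (b 3) (b 1), ι_mul_ι_mul_comm (b 3) (b 2),
    ι_mul_ι_comm (b 2) (b 1), ι_mul_ι_comm (b 3) (b 1), ι_mul_ι_comm (b 3) (b 2),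
    mul_neg, neg_neg, mul_zero, smul_zero, smul_neg, add_zero, zero_add, neg_zero]
  rw [Matrix.pfaffianFour]
  module

theorem smul_bivectorOfMatrix_eq_ι_mul_ι (b : Fin 4 → M) {A : Matrix (Fin 4) (Fin 4) R}
    (hA : A.pfaffianFour = 0) :
    A 0 1 • bivectorOfMatrix b A = ι R (A 0 1 • b 0 - A 1 2 • b 2 - A 1 3 • b 3) *
      ι R (A 0 1 • b 1 + A 0 2 • b 2 + A 0 3 • b 3) := by
  simp only [bivectorOfMatrix_apply, map_add, map_sub, map_smul, mul_add, sub_mul,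
    smul_mul_assoc, mul_smul_comm, ι_sq_zero, ι_mul_ι_comm (b 2) (b 1), ι_mul_ι_comm (b 3) (b 1),
    ι_mul_ι_comm (b 3) (b 2), smul_zero, smul_neg]
  rw [Matrix.pfaffianFour] at hA
  match_scalars <;> grind

end CommRing

section Field

variable {K V : Type*} [Field K] [AddCommGroup V] [Module K V]

theorem ιMulti_ne_zero_iff_linearIndependent {n : ℕ} {v : Fin n → V} :
    ιMulti K n v ≠ 0 ↔ LinearIndependent K v := by
  refine ⟨fun h => by_contra fun hv => h ((ιMulti K n).map_linearDependent v hv), fun hv => ?_⟩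
  have h := (exteriorPower.ιMulti_family_linearIndependent_field (n := n) hv).ne_zero
    ⟨Finset.univ, Finset.card_fin n⟩
  rw [ne_eq, ← Submodule.coe_eq_zero, exteriorPower.ιMulti_family_apply_coe] at h
  convert h using 2
  ext i
  exact congrArg v
    (congrFun (Finset.orderEmbOfFin_unique _ (fun _ => Finset.mem_univ _) strictMono_id) i)

theorem ι_mul_ι_mul_ι_mul_ι_ne_zero_iff {a b c d : V} :
    ι K a * ι K b * ι K c * ι K d ≠ 0 ↔ LinearIndependent K ![a, b, c, d] := by
  rw [← ιMulti_fin_four, ιMulti_ne_zero_iff_linearIndependent]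

theorem exists_eq_ι_mul_ι_of_mul_self_eq_zero [NeZero (2 : K)] [FiniteDimensional K V]
    (hV : finrank K V = 4) {u w : V} (huw : LinearIndependent K ![u, w])
    {E : ExteriorAlgebra K V} (hE : E ∈ ⋀[K]^2 V) (hEE : E * E = 0)
    (hEuw : E * ι K u * ι K w ≠ 0) : ∃ e₁ e₂ : V, E = ι K e₁ * ι K e₂ := by
  obtain ⟨b, rfl, rfl⟩ := exists_basis_fin_four_extending_pair hV huw
  obtain ⟨A, rfl⟩ := exists_bivectorOfMatrix_eq b hE
  have hΩ : ι K (b 0) * ι K (b 1) * ι K (b 2) * ι K (b 3) ≠ 0 :=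
    ι_mul_ι_mul_ι_mul_ι_ne_zero_iff.2 <| by
      convert b.linearIndependent
      exact FinVec.etaExpand_eq _
  have hA : A 0 1 ≠ 0 := by
    rw [bivectorOfMatrix_mul_ι_mul_ι] at hEuw
    exact left_ne_zero_of_smul hEuw
  have hpf : A.pfaffianFour = 0 := by
    rw [bivectorOfMatrix_mul_self, smul_eq_zero, mul_eq_zero] at hEE
    exact (hEE.resolve_right hΩ).resolve_left two_ne_zero
  rw [← inv_smul_smul₀ hA (bivectorOfMatrix b A), smul_bivectorOfMatrix_eq_ι_mul_ι b hpf,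
    ← mul_smul_comm, ← LinearMap.map_smul]
  exact ⟨_, _, rfl⟩

end Field

end ExteriorAlgebra

/-- Let `V` be a 4-dimensional real vector space and `ε_m, ε_n ∈ V` linearly
independent. For a bivector `E ∈ ⋀²V` the following are equivalent:
(i) `E ∧ E = 0` and `E ∧ ε_m ∧ ε_n ≠ 0` (in `⋀⁴V`);
(ii) `E = e₁ ∧ e₂` for some `e₁, e₂` such that `(e₁, e₂, ε_m, ε_n)` is linearly independent
(hence a basis of `V`).  In the paper's notation: `φ(W') = B'`. -/
theorem bivector_decomposable_transversal_iff
    (V : Type*) [AddCommGroup V] [Module ℝ V] [FiniteDimensional ℝ V]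
    (hdim : Module.finrank ℝ V = 4)
    (εm εn : V) (hε : LinearIndependent ℝ ![εm, εn])
    (E : ExteriorAlgebra ℝ V) (hE : E ∈ ⋀[ℝ]^2 V) :
    (E * E = 0 ∧ E * ι ℝ εm * ι ℝ εn ≠ 0) ↔
      ∃ e₁ e₂ : V, LinearIndependent ℝ ![e₁, e₂, εm, εn] ∧ E = ι ℝ e₁ * ι ℝ e₂ := by
  constructor
  · rintro ⟨hEE, hEε⟩
    obtain ⟨e₁, e₂, rfl⟩ := exists_eq_ι_mul_ι_of_mul_self_eq_zero hdim hε hE hEE hEε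
    exact ⟨e₁, e₂, ι_mul_ι_mul_ι_mul_ι_ne_zero_iff.1 hEε, rfl⟩
  · rintro ⟨e₁, e₂, hli, rfl⟩
    exact ⟨ι_mul_ι_mul_ι_mul_ι_self e₁ e₂, ι_mul_ι_mul_ι_mul_ι_ne_zero_iff.2 hli⟩
end

section
/- Let V be a real vector space of finite dimension 4 and let e₁, e₂ ∈ V be linearly independent. The linear map ⋀²V × ⋀²V → ⋀³V defined by (X₁, X₂) ↦ e₁∧X₂ − e₂∧X₁ is surjective, and its kernel has dimension 8. (This is the pointwise statement that the corner map W_{∂∂}^{(1,2)} is surjective but not injective, with 8-dimensional kernel.) -/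
/-!
In a basis of `V` containing `e₁` and `e₂`, the 3-vectors `b_i ∧ b_j ∧ b_k` span `⋀³V`, and
since `3 + 2 > 4` every such triple contains `e₁` or `e₂`; after reordering it is `e₁ ∧ X` or
`e₂ ∧ X` with `X ∈ ⋀²V`, hence lies in the range. Rank–nullity then gives
`dim ker = 2·C(4,2) − C(4,3) = 12 − 4 = 8`.
-/

open ExteriorAlgebra

variable {V : Type*} [AddCommGroup V] [Module ℝ V]

/-- The pointwise corner map `W_{∂∂}^{(1,2)} : ⋀²V × ⋀²V → ⋀³V`,
`(X₁, X₂) ↦ e₁∧X₂ − e₂∧X₁` (valued in the exterior algebra). -/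
noncomputable def W12 (e₁ e₂ : V) :
    (⋀[ℝ]^2 V) × (⋀[ℝ]^2 V) →ₗ[ℝ] ExteriorAlgebra ℝ V :=
  (LinearMap.mulLeft ℝ (ι ℝ e₁)).comp
      ((⋀[ℝ]^2 V).subtype.comp (LinearMap.snd ℝ (⋀[ℝ]^2 V) (⋀[ℝ]^2 V)))
    - (LinearMap.mulLeft ℝ (ι ℝ e₂)).comp
      ((⋀[ℝ]^2 V).subtype.comp (LinearMap.fst ℝ (⋀[ℝ]^2 V) (⋀[ℝ]^2 V)))

namespace ExteriorAlgebra

section CommRing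

variable {R M : Type*} [CommRing R] [AddCommGroup M] [Module R M]

theorem ι_mul_mem_exteriorPower_succ (x : M) {k : ℕ} {y : ExteriorAlgebra R M}
    (hy : y ∈ ⋀[R]^k M) : ι R x * y ∈ ⋀[R]^(k + 1) M := by
  rw [exteriorPower, pow_succ']
  exact Submodule.mul_mem_mul (LinearMap.mem_range_self _ x) hy

theorem ιMulti_mem_map_mulLeft {k : ℕ} (v : Fin (k + 1) → M) (j : Fin (k + 1)) :
    ιMulti R (k + 1) v ∈ (⋀[R]^k M).map (LinearMap.mulLeft R (ι R (v j))) := by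
  set σ := Equiv.swap 0 j
  have hσ : ιMulti R (k + 1) v = σ.sign • ιMulti R (k + 1) (v ∘ σ) := by
    rw [AlternatingMap.map_perm, smul_smul, Int.units_mul_self, one_smul]
  rw [hσ, ιMulti_succ_apply]
  refine Submodule.smul_of_tower_mem _ _
    ⟨ιMulti R k (Matrix.vecTail (v ∘ σ)), ιMulti_range R k ⟨_, rfl⟩, ?_⟩
  simp [σ]

theorem exteriorPower_succ_le_sup_map_mulLeft_basis {I : Type*} [Fintype I] [LinearOrder I]
    (b : Module.Basis I R M) {k : ℕ} (hk : Fintype.card I < k + 3) {i₁ i₂ : I}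
    (hi : i₁ ≠ i₂) :
    ⋀[R]^(k + 1) M ≤ (⋀[R]^k M).map (LinearMap.mulLeft R (ι R (b i₁))) ⊔
      (⋀[R]^k M).map (LinearMap.mulLeft R (ι R (b i₂))) := by
  rw [← exteriorPower.ιMulti_family_span_fixedDegree_of_span R b.span_eq, Submodule.span_le]
  rintro _ ⟨t, rfl⟩
  obtain ⟨i, hi_inter⟩ := Finset.inter_nonempty_of_card_lt_card_add_card
    (Finset.subset_univ (t : Finset I)) (Finset.subset_univ {i₁, i₂})
    (by rw [Finset.card_univ, Set.powersetCard.card_eq, Finset.card_pair hi]; omega)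
  obtain ⟨hit, hi₁₂⟩ := Finset.mem_inter.mp hi_inter
  obtain ⟨j, hj⟩ := (Set.powersetCard.mem_range_ofFinEmbEquiv_symm_iff_mem t i).mpr hit
  have hmem := ιMulti_mem_map_mulLeft (R := R) (b ∘ Set.powersetCard.ofFinEmbEquiv.symm t) j
  rw [Function.comp_apply, hj] at hmem
  rw [Finset.mem_insert, Finset.mem_singleton] at hi₁₂
  rcases hi₁₂ with rfl | rfl
  · exact Submodule.mem_sup_left hmem
  · exact Submodule.mem_sup_right hmem

end CommRing

theorem exteriorPower_succ_le_sup_map_mulLeft {K M : Type*} [Field K] [AddCommGroup M]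
    [Module K M] [FiniteDimensional K M] {k : ℕ} (hk : Module.finrank K M < k + 3) {e₁ e₂ : M}
    (he : LinearIndependent K ![e₁, e₂]) :
    ⋀[K]^(k + 1) M ≤ (⋀[K]^k M).map (LinearMap.mulLeft K (ι K e₁)) ⊔
      (⋀[K]^k M).map (LinearMap.mulLeft K (ι K e₂)) := by
  classical
  obtain ⟨I, b, i₁, i₂, hi, rfl, rfl⟩ : ∃ (I : Set M) (b : Module.Basis I K M) (i₁ i₂ : I),
      i₁ ≠ i₂ ∧ b i₁ = e₁ ∧ b i₂ = e₂ := by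
    have he' := he.linearIndepOn_id
    refine ⟨_, Module.Basis.extend he', ⟨e₁, he'.subset_extend _ ⟨0, rfl⟩⟩,
      ⟨e₂, he'.subset_extend _ ⟨1, rfl⟩⟩, ?_, by simp, by simp⟩
    simpa using he.injective.ne (show (0 : Fin 2) ≠ 1 by decide)
  let : Fintype I := FiniteDimensional.fintypeBasisIndex b
  let : LinearOrder I := linearOrderOfSTO WellOrderingRel
  exact exteriorPower_succ_le_sup_map_mulLeft_basis b (Module.finrank_eq_card_basis b ▸ hk) hi

end ExteriorAlgebra

theorem range_W12 [FiniteDimensional ℝ V] (hdim : Module.finrank ℝ V ≤ 4) {e₁ e₂ : V}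
    (hind : LinearIndependent ℝ ![e₁, e₂]) :
    LinearMap.range (W12 e₁ e₂) = ⋀[ℝ]^3 V := by
  refine le_antisymm ?_ ?_
  · rintro _ ⟨X, rfl⟩
    exact Submodule.sub_mem _ (ι_mul_mem_exteriorPower_succ _ X.2.2)
      (ι_mul_mem_exteriorPower_succ _ X.1.2)
  · refine (exteriorPower_succ_le_sup_map_mulLeft (by omega) hind).trans (sup_le ?_ ?_)
    · rintro _ ⟨y, hy, rfl⟩
      exact ⟨(0, ⟨y, hy⟩), by simp [W12]⟩
    · rintro _ ⟨y, hy, rfl⟩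
      exact ⟨(⟨-y, neg_mem hy⟩, 0), by simp [W12]⟩

theorem W12_surjective_ker_finrank_eight_general
    (hdim : Module.finrank ℝ V = 4) (e₁ e₂ : V)
    (hind : LinearIndependent ℝ ![e₁, e₂]) :
    LinearMap.range (W12 e₁ e₂) = ⋀[ℝ]^3 V ∧
    Module.finrank ℝ (LinearMap.ker (W12 e₁ e₂)) = 8 := by
  have : FiniteDimensional ℝ V := Module.finite_of_finrank_eq_succ hdim
  have hrange := range_W12 hdim.le hind
  refine ⟨hrange, ?_⟩
  have hrank := LinearMap.finrank_range_add_finrank_ker (W12 e₁ e₂)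
  rw [hrange, Module.finrank_prod, exteriorPower.finrank_eq, exteriorPower.finrank_eq, hdim]
    at hrank
  have hchoose : Nat.choose 4 3 = 4 ∧ Nat.choose 4 2 = 6 := ⟨rfl, rfl⟩
  omega

/-- For `V` 4-dimensional and `e₁, e₂` linearly independent, the map
`(X₁,X₂) ↦ e₁∧X₂ − e₂∧X₁` from `⋀²V × ⋀²V` is surjective onto `⋀³V` and its kernel has
dimension 8. -/
theorem W12_surjective_ker_finrank_eight [FiniteDimensional ℝ V]
    (hdim : Module.finrank ℝ V = 4) (e₁ e₂ : V)
    (hind : LinearIndependent ℝ ![e₁, e₂]) :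
    LinearMap.range (W12 e₁ e₂) = ⋀[ℝ]^3 V ∧
    Module.finrank ℝ (LinearMap.ker (W12 e₁ e₂)) = 8 :=
  W12_surjective_ker_finrank_eight_general hdim e₁ e₂ hind
end

section
/- Let A be a commutative ring carrying a Lie ring structure on the same underlying additive group whose bracket {·,·} satisfies the Leibniz rule {a, b·c} = {a,b}·c + b·{a,c} for all a, b, c ∈ A (i.e. A is a Poisson algebra), and let I be a (ring) ideal of A which is a coisotrope, i.e. {x, y} ∈ I for all x, y ∈ I. Define the Lie normalizer N(I) := {a ∈ A | {a, x} ∈ I for all x ∈ I}. Then: (i) I ⊆ N(I); (ii) N(I) is closed under addition, multiplication, and the bracket {·,·}; (iii) the product and the bracket descend to the quotient N(I)/I, i.e. for all a, a', b, b' ∈ N(I) with a − a' ∈ I and b − b' ∈ I one has a·b − a'·b' ∈ I and {a, b} − {a', b'} ∈ I. (Hence N(I)/I is a Poisson algebra, the reduction of A with respect to I.) -/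
/-- Let `A` be a commutative ring with a (ℤ-bilinear) skew-symmetric
bracket satisfying the Jacobi identity and the Leibniz rule (a Poisson algebra), and let
`I` be a coisotrope, i.e. an ideal with `{I,I} ⊆ I`.  With
`N(I) = {a | {a,x} ∈ I for all x ∈ I}` the Lie normalizer, one has:
(i) `I ⊆ N(I)`;
(ii) `N(I)` is closed under addition, multiplication, and the bracket;
(iii) the product and the bracket descend to `N(I)/I`. -/
theorem coisotropic_reduction_poisson
    (A : Type*) [CommRing A] (br : A → A → A)
    (br_add_left : ∀ a b c : A, br (a + b) c = br a c + br b c)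
    (br_add_right : ∀ a b c : A, br a (b + c) = br a b + br a c)
    (br_skew : ∀ a b : A, br a b = - br b a)
    (br_jacobi : ∀ a b c : A, br a (br b c) = br (br a b) c + br b (br a c))
    (br_leibniz : ∀ a b c : A, br a (b * c) = br a b * c + b * br a c)
    (I : Ideal A) (hI : ∀ x ∈ I, ∀ y ∈ I, br x y ∈ I) :
    let N : Set A := {a : A | ∀ x ∈ I, br a x ∈ I}
    (∀ x ∈ I, x ∈ N) ∧
    (∀ a ∈ N, ∀ b ∈ N, a + b ∈ N ∧ a * b ∈ N ∧ br a b ∈ N) ∧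
    (∀ a a' b b' : A, a ∈ N → a' ∈ N → b ∈ N → b' ∈ N →
      a - a' ∈ I → b - b' ∈ I →
      a * b - a' * b' ∈ I ∧ br a b - br a' b' ∈ I) := by
  intro N
  -- reversed-membership: if a ∈ N and x ∈ I then br x a ∈ I
  have hrev : ∀ a ∈ N, ∀ x ∈ I, br x a ∈ I := by
    intro a ha x hx
    rw [br_skew]
    exact I.neg_mem (ha x hx)
  -- subtraction on the left
  have hsub_left : ∀ a a' b : A, br (a - a') b = br a b - br a' b := by
    intro a a' b
    have := br_add_left (a - a') a' b
    rw [sub_add_cancel] at this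
    linear_combination -this
  -- subtraction on the right
  have hsub_right : ∀ a b b' : A, br a (b - b') = br a b - br a b' := by
    intro a b b'
    have := br_add_right a (b - b') b'
    rw [sub_add_cancel] at this
    linear_combination -this
  refine ⟨?_, ?_, ?_⟩
  · intro x hx y hy
    exact hI x hx y hy
  · intro a ha b hb
    refine ⟨?_, ?_, ?_⟩
    · intro x hx
      rw [br_add_left]
      exact I.add_mem (ha x hx) (hb x hx)
    · intro x hx
      rw [br_skew, br_leibniz]
      exact I.neg_mem (I.add_mem (I.mul_mem_right b (hrev a ha x hx))
        (I.mul_mem_left a (hrev b hb x hx)))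
    · intro x hx
      rw [br_skew, br_jacobi]
      exact I.neg_mem (I.add_mem (hrev b hb _ (hrev a ha x hx)) (ha _ (hrev b hb x hx)))
  · intro a a' b b' ha ha' hb hb' hA hB
    constructor
    · have : a * b - a' * b' = (a - a') * b + a' * (b - b') := by ring
      rw [this]
      exact I.add_mem (I.mul_mem_right b hA) (I.mul_mem_left a' hB)
    · have : br a b - br a' b' = br (a - a') b + br a' (b - b') := by
        rw [hsub_left, hsub_right]; ring
      rw [this]
      exact I.add_mem (hrev b hb _ hA) (ha' _ hB)
end
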